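/- Let the columns of X ∈ ℝ^{n×s} belong to a union of k affine subspaces A_1,...,A_k, each of dimension at most r. Then rank φ_d(X) ≤ k · binomial(r+d, d) for all d ≥ 1. -/

import Mathlib

/-!
Parametrize an affine piece `b + W` by `c ↦ b + ∑ l, c l • E l` over a basis `E` of `W`,
with `m = dim W ≤ r`. A monomial of degree `≤ d` in the coordinates of `b + ∑ l, c l • E l`
is a polynomial of degree `≤ d` in `c`, so `φ_d(b + ∑ l, c l • E l) = T φ_d(c)` for one
linear map `T` defined on the `(m + d).choose d`-dimensional space of monomials in `m`
variables. The lifted columns coming from one piece therefore span at most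
`(r + d).choose d` dimensions.
-/

open MvPolynomial Module Submodule
open scoped Matrix

/-- The monomial feature ("lifting") matrix `φ_d(X)`. -/
def phiMatrix {n s : ℕ} (d : ℕ) (X : Matrix (Fin n) (Fin s) ℝ) :
    Matrix {α : Fin n → ℕ // ∑ i, α i ≤ d} (Fin s) ℝ :=
  Matrix.of fun α j => ∏ i, X i j ^ α.1 i

def sumLeEquivSumEq (m d : ℕ) :
    {β : Fin m → ℕ // ∑ i, β i ≤ d} ≃ {P : Fin (m + 1) → ℕ // ∑ i, P i = d} where
  toFun β := ⟨Fin.cons (d - ∑ i, β.1 i) β.1, by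
    have := β.2
    rw [Fin.sum_univ_succ, Fin.cons_zero]
    simp only [Fin.cons_succ]
    omega⟩
  invFun P := ⟨fun i => P.1 i.succ, by
    show ∑ i : Fin m, P.1 i.succ ≤ d
    have := P.2
    rw [Fin.sum_univ_succ] at this
    omega⟩
  left_inv β := by ext; simp
  right_inv P := by
    have := P.2
    rw [Fin.sum_univ_succ] at this
    ext i
    refine Fin.cases ?_ (fun _ => ?_) i
    · show d - ∑ i : Fin m, P.1 i.succ = P.1 0
      omega
    · rfl

noncomputable instance (m d : ℕ) : Fintype {β : Fin m → ℕ // ∑ i, β i ≤ d} :=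
  .ofEquiv _ ((sumLeEquivSumEq m d).trans (Sym.equivNatSumOfFintype (Fin (m + 1)) d).symm).symm

theorem card_sumLe (m d : ℕ) :
    Fintype.card {β : Fin m → ℕ // ∑ i, β i ≤ d} = (m + d).choose d := by
  rw [Fintype.card_congr ((sumLeEquivSumEq m d).trans (Sym.equivNatSumOfFintype _ d).symm),
    Sym.card_sym_fin_eq_multichoose, Nat.multichoose_eq, Nat.add_right_comm, Nat.add_sub_cancel]

section AffineParametrization

variable {R : Type*} [CommSemiring R] {m n : ℕ}

theorem eval_eq_sum_of_totalDegree_le {p : MvPolynomial (Fin m) R} {d : ℕ}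
    (hp : p.totalDegree ≤ d) (c : Fin m → R) :
    eval c p = ∑ β : {β : Fin m → ℕ // ∑ i, β i ≤ d},
      coeff (Finsupp.equivFunOnFinite.symm β.1) p * ∏ i, c i ^ β.1 i := by
  let e : {β : Fin m → ℕ // ∑ i, β i ≤ d} ↪ (Fin m →₀ ℕ) :=
    ⟨fun β => Finsupp.equivFunOnFinite.symm β.1,
      Finsupp.equivFunOnFinite.symm.injective.comp Subtype.val_injective⟩
  have hsupp : p.support ⊆ Finset.univ.map e := fun s hs => by
    have hs_deg : ∑ i, s i ≤ d := by
      simpa [Finsupp.sum_fintype] using (le_totalDegree hs).trans hp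
    exact Finset.mem_map.2 ⟨⟨s, hs_deg⟩, Finset.mem_univ _, by ext; simp [e]⟩
  rw [eval_eq', Finset.sum_subset hsupp fun s _ hs => by simp [notMem_support_iff.1 hs],
    Finset.sum_map]
  rfl

noncomputable def affineParam (b : Fin n → R) (E : Fin m → Fin n → R) (t : Fin n) :
    MvPolynomial (Fin m) R :=
  C (b t) + ∑ l, C (E l t) * X l

theorem totalDegree_affineParam_le (b : Fin n → R) (E : Fin m → Fin n → R) (t : Fin n) :
    (affineParam b E t).totalDegree ≤ 1 := by
  refine (totalDegree_add _ _).trans (max_le (by simp) (totalDegree_finsetSum_le fun l _ => ?_))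
  rw [C_mul_X_eq_monomial]
  exact (totalDegree_monomial_le _ _).trans (by simp)

theorem eval_affineParam (b : Fin n → R) (E : Fin m → Fin n → R) (t : Fin n)
    (c : Fin m → R) :
    eval c (affineParam b E t) = (b + ∑ l, c l • E l) t := by
  simp [affineParam, Finset.sum_apply, mul_comm]

theorem totalDegree_prod_pow_le {ι σ : Type*} [Fintype ι] {q : ι → MvPolynomial σ R}
    (hq : ∀ t, (q t).totalDegree ≤ 1) (α : ι → ℕ) :
    (∏ t, q t ^ α t).totalDegree ≤ ∑ t, α t :=
  (totalDegree_finsetProd _ _).trans <| Finset.sum_le_sum fun t _ =>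
    (totalDegree_pow _ _).trans (by simpa using Nat.mul_le_mul_left (α t) (hq t))

end AffineParametrization

def phiVec {R : Type*} [CommSemiring R] {n : ℕ} (d : ℕ) (x : Fin n → R) :
    {α : Fin n → ℕ // ∑ i, α i ≤ d} → R :=
  fun α => ∏ i, x i ^ α.1 i

theorem phiMatrix_transpose_apply {n s : ℕ} (d : ℕ) (X : Matrix (Fin n) (Fin s) ℝ)
    (j : Fin s) :
    (phiMatrix d X)ᵀ j = phiVec d (fun i => X i j) :=
  rfl

section AffineLift

variable {R : Type*} {m n : ℕ}

noncomputable def affineCoeffVec [CommSemiring R] (d : ℕ) (b : Fin n → R)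
    (E : Fin m → Fin n → R) (β : {β : Fin m → ℕ // ∑ l, β l ≤ d}) :
    {α : Fin n → ℕ // ∑ t, α t ≤ d} → R :=
  fun α => coeff (Finsupp.equivFunOnFinite.symm β.1) (∏ t, affineParam b E t ^ α.1 t)

theorem phiVec_add_sum_smul [CommSemiring R] (d : ℕ) (b : Fin n → R) (E : Fin m → Fin n → R)
    (c : Fin m → R) :
    phiVec d (b + ∑ l, c l • E l) = ∑ β, phiVec d c β • affineCoeffVec d b E β := by
  funext α
  have hdeg := (totalDegree_prod_pow_le (totalDegree_affineParam_le b E) α.1).trans α.2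
  calc phiVec d (b + ∑ l, c l • E l) α = eval c (∏ t, affineParam b E t ^ α.1 t) := by
        simp [phiVec, eval_affineParam]
    _ = _ := by
        rw [eval_eq_sum_of_totalDegree_le hdeg, Finset.sum_apply]
        exact Finset.sum_congr rfl fun β _ => mul_comm _ _

theorem phiVec_mem_span_affineCoeffVec [CommRing R] (d : ℕ) {b x : Fin n → R}
    {E : Fin m → Fin n → R} (h : x - b ∈ span R (Set.range E)) :
    phiVec d x ∈ span R (Set.range (affineCoeffVec d b E)) := by
  obtain ⟨c, hc⟩ := (mem_span_range_iff_exists_fun R).1 h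
  rw [← add_sub_cancel b x, ← hc, phiVec_add_sum_smul]
  exact sum_mem fun β _ => smul_mem _ _ (subset_span ⟨β, rfl⟩)

end AffineLift

theorem Submodule.span_range_coe_finBasis {K V : Type*} [DivisionRing K] [AddCommGroup V]
    [Module K V] (W : Submodule K V) [FiniteDimensional K W] :
    span K (Set.range fun l => (finBasis K W l : V)) = W := by
  rw [show (fun l => (finBasis K W l : V)) = W.subtype ∘ finBasis K W from rfl, Set.range_comp,
    span_image, (finBasis K W).span_eq, map_subtype_top]

theorem rank_phiMatrix_le_of_union_affine_general (n s d k r : ℕ)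
    (W : Fin k → Submodule ℝ (Fin n → ℝ)) (hW : ∀ i, Module.finrank ℝ (W i) ≤ r)
    (b : Fin k → Fin n → ℝ) (X : Matrix (Fin n) (Fin s) ℝ)
    (hX : ∀ j, ∃ i, ∃ w ∈ W i, (fun t => X t j) = w + b i) :
    (phiMatrix d X).rank ≤ k * (r + d).choose d := by
  let E (i : Fin k) (l : Fin (finrank ℝ (W i))) : Fin n → ℝ := finBasis ℝ (W i) l
  let v (β : Σ i, {β : Fin (finrank ℝ (W i)) → ℕ // ∑ l, β l ≤ d}) :=
    affineCoeffVec d (b β.1) (E β.1) β.2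
  have hcols : span ℝ (Set.range (phiMatrix d X)ᵀ) ≤ span ℝ (Set.range v) := by
    refine span_le.2 (Set.range_subset_iff.2 fun j => ?_)
    obtain ⟨i, w, hw, hXj⟩ := hX j
    have hx : (fun t => X t j) - b i ∈ span ℝ (Set.range (E i)) := by
      rwa [hXj, add_sub_cancel_right, span_range_coe_finBasis]
    rw [phiMatrix_transpose_apply]
    have hsub : Set.range (affineCoeffVec d (b i) (E i)) ⊆ Set.range v := by
      rintro _ ⟨β, rfl⟩
      exact ⟨⟨i, β⟩, rfl⟩
    exact span_mono hsub (phiVec_mem_span_affineCoeffVec d hx)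
  calc (phiMatrix d X).rank = finrank ℝ (span ℝ (Set.range (phiMatrix d X)ᵀ)) :=
        Matrix.rank_eq_finrank_span_cols _
    _ ≤ finrank ℝ (span ℝ (Set.range v)) := finrank_mono hcols
    _ ≤ ∑ i, (finrank ℝ (W i) + d).choose d :=
        (finrank_range_le_card v).trans_eq (by simp [Fintype.card_sigma, card_sumLe])
    _ ≤ ∑ _i : Fin k, (r + d).choose d :=
        Finset.sum_le_sum fun i _ => Nat.choose_le_choose d (Nat.add_le_add_right (hW i) d)
    _ = k * (r + d).choose d := by simp

/-- If the columns of `X ∈ ℝ^{n×s}` belong to a union of `k` affine subspaces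
(translates `b i + W i` of linear subspaces `W i`), each of dimension at most `r`, then
for all `d ≥ 1`: `rank φ_d(X) ≤ k * (r+d).choose d`. -/
theorem rank_phiMatrix_le_of_union_affine (n s d k r : ℕ) (hd : 1 ≤ d)
    (W : Fin k → Submodule ℝ (Fin n → ℝ)) (hW : ∀ i, Module.finrank ℝ (W i) ≤ r)
    (b : Fin k → Fin n → ℝ) (X : Matrix (Fin n) (Fin s) ℝ)
    (hX : ∀ j, ∃ i, ∃ w ∈ W i, (fun t => X t j) = w + b i) :
    (phiMatrix d X).rank ≤ k * (r + d).choose d :=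
  rank_phiMatrix_le_of_union_affine_general n s d k r W hW b X hX
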